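/- arXiv:2208.02065 — 3 statements merged into one kernel-verified Lean document; each statement's English description precedes it below -/
import Mathlib

section
/- For each natural number N ≥ 1 and each d ≥ 1, there is a constant C > 0 such that for all t with 0 < t < 1, the N-th derivative of the function t ↦ (sinh(2t))^{−d/2} is bounded in absolute value by C · t^{−d/2 − N}. -/
/-!
Differentiating `Q(cosh 2t) · sinh(2t)^q` gives `Q̃(cosh 2t) · sinh(2t)^(q-1)` for an explicit
polynomial `Q̃` (using `sinh² = cosh² - 1`), so the `n`-th derivative of `sinh(2t)^p` is
`Pₙ(cosh 2t) · sinh(2t)^(p-n)` for a polynomial `Pₙ`. On `0 < t < 1` the factor `Pₙ(cosh 2t)` is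
bounded since `cosh 2t ∈ [1, cosh 2]`, and `sinh(2t)^(p-n) ≤ t^(p-n)` because `t ≤ sinh 2t` and
`p - n ≤ 0`.
-/

open Real Polynomial

noncomputable section

def sinhRpowDerivStep (q : ℝ) (Q : ℝ[X]) : ℝ[X] :=
  C 2 * (X ^ 2 - 1) * derivative Q + C (2 * q) * X * Q

def sinhRpowDerivPoly (p : ℝ) : ℕ → ℝ[X]
  | 0 => 1
  | n + 1 => sinhRpowDerivStep (p - n) (sinhRpowDerivPoly p n)

end

theorem hasDerivAt_eval_cosh_two_mul_mul_sinh_two_mul_rpow (Q : ℝ[X]) (q : ℝ) {t : ℝ}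
    (ht : 0 < t) :
    HasDerivAt (fun s => Q.eval (cosh (2 * s)) * sinh (2 * s) ^ q)
      ((sinhRpowDerivStep q Q).eval (cosh (2 * t)) * sinh (2 * t) ^ (q - 1)) t := by
  have hsinh : 0 < sinh (2 * t) := sinh_pos_iff.2 (by linarith)
  have hlin : HasDerivAt (fun s : ℝ => 2 * s) 2 t := by
    simpa using (hasDerivAt_id t).const_mul (2 : ℝ)
  have hcosh := (hasDerivAt_cosh (2 * t)).comp t hlin
  have hQ := (Q.hasDerivAt (cosh (2 * t))).comp t hcosh
  have hpow := (hasDerivAt_rpow_const (p := q) (Or.inl hsinh.ne')).comp t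
    ((hasDerivAt_sinh (2 * t)).comp t hlin)
  have hsq : cosh (2 * t) ^ 2 = sinh (2 * t) ^ 2 + 1 := cosh_sq (2 * t)
  have hsplit : sinh (2 * t) ^ q = sinh (2 * t) * sinh (2 * t) ^ (q - 1) := by
    rw [mul_comm (sinh (2 * t)), ← rpow_add_one hsinh.ne', sub_add_cancel]
  refine (hQ.mul hpow).congr_deriv ?_
  simp only [sinhRpowDerivStep, eval_add, eval_mul, eval_C, eval_X, eval_pow, eval_sub,
    eval_one, Function.comp_apply, hsplit]
  linear_combination (-2 * (derivative Q).eval (cosh (2 * t)) * sinh (2 * t) ^ (q - 1)) * hsq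

theorem iteratedDeriv_sinh_two_mul_rpow (p : ℝ) (n : ℕ) {t : ℝ} (ht : 0 < t) :
    iteratedDeriv n (fun s => sinh (2 * s) ^ p) t
      = (sinhRpowDerivPoly p n).eval (cosh (2 * t)) * sinh (2 * t) ^ (p - n) := by
  induction n generalizing t with
  | zero => simp [sinhRpowDerivPoly]
  | succ n ih =>
    have hev : iteratedDeriv n (fun s => sinh (2 * s) ^ p) =ᶠ[nhds t]
        fun s => (sinhRpowDerivPoly p n).eval (cosh (2 * s)) * sinh (2 * s) ^ (p - n) := by
      filter_upwards [eventually_gt_nhds ht] with s hs using ih hs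
    rw [iteratedDeriv_succ, hev.deriv_eq,
      (hasDerivAt_eval_cosh_two_mul_mul_sinh_two_mul_rpow _ _ ht).deriv,
      sinhRpowDerivPoly, Nat.cast_succ, sub_sub]

theorem sinh_two_mul_rpow_le_rpow {q t : ℝ} (hq : q ≤ 0) (ht : 0 < t) :
    sinh (2 * t) ^ q ≤ t ^ q :=
  rpow_le_rpow_of_nonpos ht (by linarith [self_lt_sinh_iff.2 (by linarith : 0 < 2 * t)]) hq

theorem cosh_two_mul_mem_Icc {t : ℝ} (ht : 0 < t) (ht1 : t < 1) :
    cosh (2 * t) ∈ Set.Icc 1 (cosh 2) := by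
  refine ⟨one_le_cosh _, cosh_le_cosh.2 ?_⟩
  rw [abs_of_pos (by linarith), abs_of_pos two_pos]
  linarith

theorem exists_abs_iteratedDeriv_sinh_two_mul_rpow_le {p : ℝ} {n : ℕ} (hp : p ≤ n) :
    ∃ C > 0, ∀ t : ℝ, 0 < t → t < 1 →
      |iteratedDeriv n (fun s => sinh (2 * s) ^ p) t| ≤ C * t ^ (p - n) := by
  obtain ⟨M, hM⟩ := isCompact_Icc.exists_bound_of_continuousOn
    (sinhRpowDerivPoly p n).continuous.continuousOn (s := Set.Icc 1 (cosh 2))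
  refine ⟨max M 1, by positivity, fun t ht ht1 => ?_⟩
  have hsinh : 0 < sinh (2 * t) := sinh_pos_iff.2 (by linarith)
  rw [iteratedDeriv_sinh_two_mul_rpow p n ht, abs_mul, abs_of_pos (rpow_pos_of_pos hsinh _)]
  exact mul_le_mul ((hM _ (cosh_two_mul_mem_Icc ht ht1)).trans (le_max_left M 1))
    (sinh_two_mul_rpow_le_rpow (by linarith) ht) (rpow_pos_of_pos hsinh _).le (by positivity)

theorem iteratedDeriv_sinh_rpow_bound_general (N d : ℕ) :
    ∃ C > 0, ∀ t : ℝ, 0 < t → t < 1 →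
      |iteratedDeriv N (fun s : ℝ => Real.sinh (2 * s) ^ (-(d : ℝ) / 2)) t| ≤
        C * t ^ (-(d : ℝ) / 2 - N) :=
  exists_abs_iteratedDeriv_sinh_two_mul_rpow_le (by
    have : (0 : ℝ) ≤ d := d.cast_nonneg
    have : (0 : ℝ) ≤ N := N.cast_nonneg
    linarith)

theorem iteratedDeriv_sinh_rpow_bound (N d : ℕ) (hN : 1 ≤ N) (hd : 1 ≤ d) :
    ∃ C > 0, ∀ t : ℝ, 0 < t → t < 1 →
      |iteratedDeriv N (fun s : ℝ => Real.sinh (2 * s) ^ (-(d : ℝ) / 2)) t| ≤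
        C * t ^ (-(d : ℝ) / 2 - N) :=
  iteratedDeriv_sinh_rpow_bound_general N d
end

section
/- Suppose m : ℝ → ℂ is N-times differentiable and satisfies |m^{(j)}(τ)| ≤ C (τ² + c)^{−j/2} for all 0 ≤ j ≤ N and all τ ∈ ℝ, where c ≥ 1. Then there is a constant C' (depending on C, N) such that for all t > 0 and all τ ∈ ℝ, the N-th derivative in τ of the function τ ↦ (τ² + c)^N e^{−t(τ²+c)} m(τ) is bounded in absolute value by C' · t^{−N/2} · e^{−(t/2)(τ²+c)}. -/
/-!
The weight `(z² + c)^N e^{-t(z² + c)}` is entire, and on the circle of radius `√X / 10` about `τ`,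
where `X = τ² + c`, we have `|z² + c - X| ≤ X / 4`. Cauchy's estimate on that circle bounds its
`k`-th derivative at `τ` by a constant times `X^{N - k/2} e^{-3tX/4}`. Against
`|m^{(N-k)}(τ)| ≤ C X^{-(N-k)/2}`, every term of the Leibniz expansion is then at most a constant
times `X^{N/2} e^{-3tX/4} = t^{-N/2} (√(tX))^N e^{-tX/4} · e^{-tX/2}`, and `y^N e^{-y²/4}` is bounded.
-/

open Complex Finset
open scoped Nat

theorem rpow_neg_natCast_div_two {x : ℝ} (hx : 0 ≤ x) (n : ℕ) :
    x ^ (-(n : ℝ) / 2) = (√x ^ n)⁻¹ := by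
  rw [Real.rpow_div_two_eq_sqrt _ hx, Real.rpow_neg (Real.sqrt_nonneg x), Real.rpow_natCast]

theorem norm_iteratedDeriv_mul_le {𝕜 A : Type*} [NontriviallyNormedField 𝕜] [NormedRing A]
    [NormedAlgebra 𝕜 A] {f g : 𝕜 → A} {n : ℕ} (hf : ContDiff 𝕜 n f) (hg : ContDiff 𝕜 n g)
    (x : 𝕜) :
    ‖iteratedDeriv n (fun y => f y * g y) x‖ ≤ ∑ i ∈ range (n + 1),
      (n.choose i : ℝ) * ‖iteratedDeriv i f x‖ * ‖iteratedDeriv (n - i) g x‖ := by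
  simp only [← norm_iteratedFDeriv_eq_norm_iteratedDeriv]
  exact norm_iteratedFDeriv_mul_le hf hg x le_rfl

theorem iteratedDeriv_comp_ofReal {F : ℂ → ℂ} (hF : Differentiable ℂ F) (n : ℕ) (x : ℝ) :
    iteratedDeriv n (fun y : ℝ => F y) x = iteratedDeriv n F x := by
  induction n generalizing x with
  | zero => simp
  | succ n ih =>
    have hFn : Differentiable ℂ (iteratedDeriv n F) :=
      (hF.contDiff (n := ⊤)).differentiable_iteratedDeriv n (WithTop.coe_lt_top _)
    rw [iteratedDeriv_succ, iteratedDeriv_succ, funext ih]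
    exact ((hFn x).hasDerivAt.comp_ofReal).deriv

theorem pow_mul_exp_neg_sq_div_four_le {y : ℝ} (hy : 0 ≤ y) (n : ℕ) :
    y ^ n * Real.exp (-(y ^ 2 / 4)) ≤ n ! * Real.exp 1 := by
  have hpow : y ^ n ≤ n ! * Real.exp y := by
    have := Real.pow_div_factorial_le_exp y hy n
    rwa [div_le_iff₀ (by positivity), mul_comm] at this
  calc y ^ n * Real.exp (-(y ^ 2 / 4)) ≤ n ! * Real.exp y * Real.exp (-(y ^ 2 / 4)) := by gcongr
    _ = n ! * Real.exp (y - y ^ 2 / 4) := by rw [mul_assoc, ← Real.exp_add, sub_eq_add_neg]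
    _ ≤ n ! * Real.exp 1 := by gcongr; nlinarith [sq_nonneg (y - 2)]

noncomputable def heatWeight (N : ℕ) (c t : ℝ) (z : ℂ) : ℂ :=
  (z ^ 2 + c) ^ N * Complex.exp (-t * (z ^ 2 + c))

theorem differentiable_heatWeight (N : ℕ) (c t : ℝ) : Differentiable ℂ (heatWeight N c t) := by
  unfold heatWeight; fun_prop

theorem norm_sq_add_sub_le {c τ : ℝ} (hc : 0 ≤ c) {z : ℂ}
    (hz : ‖z - τ‖ ≤ √(τ ^ 2 + c) / 10) :
    ‖(z ^ 2 + c) - ((τ ^ 2 + c : ℝ) : ℂ)‖ ≤ (τ ^ 2 + c) / 4 := by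
  have hτ : |τ| ≤ √(τ ^ 2 + c) := Real.abs_le_sqrt (by linarith)
  have hX : √(τ ^ 2 + c) ^ 2 = τ ^ 2 + c := Real.sq_sqrt (by positivity)
  have hfactor : (z ^ 2 + c) - ((τ ^ 2 + c : ℝ) : ℂ) = (z - τ) * ((z - τ) + 2 * τ) := by
    push_cast; ring
  have hsum : ‖(z - τ) + 2 * τ‖ ≤ √(τ ^ 2 + c) / 10 + 2 * √(τ ^ 2 + c) := by
    refine (norm_add_le _ _).trans (add_le_add hz ?_)
    simpa [Complex.norm_real] using hτ
  calc ‖(z ^ 2 + c) - ((τ ^ 2 + c : ℝ) : ℂ)‖ = ‖z - τ‖ * ‖(z - τ) + 2 * τ‖ := by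
        rw [hfactor, norm_mul]
    _ ≤ √(τ ^ 2 + c) / 10 * (√(τ ^ 2 + c) / 10 + 2 * √(τ ^ 2 + c)) := by gcongr
    _ ≤ (τ ^ 2 + c) / 4 := by nlinarith [Real.sqrt_nonneg (τ ^ 2 + c)]

theorem norm_heatWeight_le {N : ℕ} {c t τ : ℝ} (hc : 0 ≤ c) (ht : 0 ≤ t) {z : ℂ}
    (hz : ‖z - τ‖ ≤ √(τ ^ 2 + c) / 10) :
    ‖heatWeight N c t z‖ ≤ (5 / 4 * (τ ^ 2 + c)) ^ N * Real.exp (-(3 / 4 * t) * (τ ^ 2 + c)) := by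
  have hclose := norm_sq_add_sub_le hc hz
  have hnorm : ‖z ^ 2 + c‖ ≤ 5 / 4 * (τ ^ 2 + c) := by
    have := norm_le_norm_add_norm_sub' (z ^ 2 + c) ((τ ^ 2 + c : ℝ) : ℂ)
    rw [Complex.norm_real, Real.norm_of_nonneg (by positivity)] at this
    linarith
  have hre : 3 / 4 * (τ ^ 2 + c) ≤ (z ^ 2 + c).re := by
    have := (abs_re_le_norm _).trans hclose
    rw [sub_re, ofReal_re] at this
    linarith [(abs_le.mp this).1]
  rw [heatWeight, norm_mul, norm_pow, norm_exp]
  gcongr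
  rw [show (-t * (z ^ 2 + c)).re = -t * (z ^ 2 + c).re by simp]
  nlinarith

theorem norm_iteratedDeriv_heatWeight_le {N : ℕ} {c t : ℝ} (hc : 0 < c) (ht : 0 ≤ t) (k : ℕ)
    (τ : ℝ) :
    ‖iteratedDeriv k (fun s : ℝ => heatWeight N c t s) τ‖ ≤
      k ! * ((5 / 4 * (τ ^ 2 + c)) ^ N * Real.exp (-(3 / 4 * t) * (τ ^ 2 + c))) /
        (√(τ ^ 2 + c) / 10) ^ k := by
  rw [iteratedDeriv_comp_ofReal (differentiable_heatWeight N c t)]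
  refine norm_iteratedDeriv_le_of_forall_mem_sphere_norm_le k (by positivity)
    (differentiable_heatWeight N c t).diffContOnCl fun z hz => ?_
  exact norm_heatWeight_le hc.le ht (mem_sphere_iff_norm.mp hz).le

theorem sqrt_pow_mul_exp_le {t X : ℝ} (ht : 0 < t) (hX : 0 ≤ X) (N : ℕ) :
    √X ^ N * Real.exp (-(3 / 4 * t) * X) ≤
      N ! * Real.exp 1 * (t ^ (-(N : ℝ) / 2) * Real.exp (-(t / 2) * X)) := by
  have hscaled := pow_mul_exp_neg_sq_div_four_le
    (mul_nonneg (Real.sqrt_nonneg t) (Real.sqrt_nonneg X)) N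
  have hsplit : √X ^ N * Real.exp (-(3 / 4 * t) * X) = (√t ^ N)⁻¹ *
      ((√t * √X) ^ N * Real.exp (-((√t * √X) ^ 2 / 4))) * Real.exp (-(t / 2) * X) := by
    rw [mul_pow, mul_pow, Real.sq_sqrt ht.le, Real.sq_sqrt hX, mul_assoc, mul_assoc,
      ← Real.exp_add]
    field_simp
    ring_nf
  rw [hsplit, rpow_neg_natCast_div_two ht.le]
  calc (√t ^ N)⁻¹ * ((√t * √X) ^ N * Real.exp (-((√t * √X) ^ 2 / 4))) *
        Real.exp (-(t / 2) * X) ≤ (√t ^ N)⁻¹ * (N ! * Real.exp 1) * Real.exp (-(t / 2) * X) := by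
        gcongr
    _ = _ := by ring

theorem norm_iteratedDeriv_heatWeight_mul_le {N k : ℕ} (hk : k ≤ N) {c t C a τ : ℝ}
    (hc : 0 < c) (ht : 0 < t) (hC : 0 ≤ C)
    (ha : a ≤ C * (τ ^ 2 + c) ^ (-((N - k : ℕ) : ℝ) / 2)) :
    ‖iteratedDeriv k (fun s : ℝ => heatWeight N c t s) τ‖ * a ≤
      k ! * 10 ^ k * (5 / 4) ^ N * C * (N ! * Real.exp 1) *
        (t ^ (-(N : ℝ) / 2) * Real.exp (-(t / 2) * (τ ^ 2 + c))) := by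
  set X := τ ^ 2 + c
  have hX : 0 < X := by positivity
  rw [rpow_neg_natCast_div_two hX.le] at ha
  have hcollect : k ! * ((5 / 4 * X) ^ N * Real.exp (-(3 / 4 * t) * X)) / (√X / 10) ^ k *
      (C * (√X ^ (N - k))⁻¹) =
      k ! * 10 ^ k * (5 / 4) ^ N * C * (√X ^ N * Real.exp (-(3 / 4 * t) * X)) := by
    have hS : 0 < √X := Real.sqrt_pos.mpr hX
    have hXN : X ^ N = √X ^ N * √X ^ N := by rw [← mul_pow, Real.mul_self_sqrt hX.le]
    have hpow : √X ^ k * √X ^ (N - k) = √X ^ N := by rw [← pow_add, Nat.add_sub_cancel' hk]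
    rw [mul_pow, div_pow √X, hXN, ← hpow]
    field_simp
  calc ‖iteratedDeriv k (fun s : ℝ => heatWeight N c t s) τ‖ * a
      ≤ k ! * ((5 / 4 * X) ^ N * Real.exp (-(3 / 4 * t) * X)) / (√X / 10) ^ k *
          (C * (√X ^ (N - k))⁻¹) :=
        (mul_le_mul_of_nonneg_left ha (norm_nonneg _)).trans
          (mul_le_mul_of_nonneg_right (norm_iteratedDeriv_heatWeight_le hc ht.le k τ)
            (by positivity))
    _ = k ! * 10 ^ k * (5 / 4) ^ N * C * (√X ^ N * Real.exp (-(3 / 4 * t) * X)) := hcollect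
    _ ≤ k ! * 10 ^ k * (5 / 4) ^ N * C *
          (N ! * Real.exp 1 * (t ^ (-(N : ℝ) / 2) * Real.exp (-(t / 2) * X))) :=
        mul_le_mul_of_nonneg_left (sqrt_pow_mul_exp_le ht hX.le N) (by positivity)
    _ = _ := by ring

theorem multiplier_key_estimate (N : ℕ) (c : ℝ) (hc : 1 ≤ c) (C : ℝ) (m : ℝ → ℂ)
    (hm : ContDiff ℝ N m)
    (hbound : ∀ j ≤ N, ∀ τ : ℝ, ‖iteratedDeriv j m τ‖ ≤ C * (τ ^ 2 + c) ^ (-(j : ℝ) / 2)) :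
    ∃ C' > 0, ∀ t : ℝ, 0 < t → ∀ τ : ℝ,
      ‖iteratedDeriv N
          (fun s : ℝ => (((s ^ 2 + c) ^ N * Real.exp (-t * (s ^ 2 + c)) : ℝ) : ℂ) * m s) τ‖ ≤
        C' * t ^ (-(N : ℝ) / 2) * Real.exp (-(t / 2) * (τ ^ 2 + c)) := by
  have hC : 0 ≤ C := by simpa using (norm_nonneg _).trans (hbound 0 N.zero_le 0)
  set K : ℝ := ∑ k ∈ range (N + 1),
    N.choose k * (k ! * 10 ^ k * (5 / 4) ^ N * C * (N ! * Real.exp 1))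
  refine ⟨K + 1, by positivity, fun t ht τ => ?_⟩
  have hweight : (fun s : ℝ => (((s ^ 2 + c) ^ N * Real.exp (-t * (s ^ 2 + c)) : ℝ) : ℂ) * m s) =
      fun s : ℝ => heatWeight N c t s * m s := by
    funext s
    simp [heatWeight, ofReal_exp]
  have hweight_smooth : ContDiff ℝ N (fun s : ℝ => heatWeight N c t s) :=
    ((differentiable_heatWeight N c t).contDiff.restrict_scalars ℝ).comp ofRealCLM.contDiff
  set B := t ^ (-(N : ℝ) / 2) * Real.exp (-(t / 2) * (τ ^ 2 + c))
  calc _ ≤ ∑ k ∈ range (N + 1), (N.choose k : ℝ) *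
          ‖iteratedDeriv k (fun s : ℝ => heatWeight N c t s) τ‖ * ‖iteratedDeriv (N - k) m τ‖ := by
        rw [hweight]; exact norm_iteratedDeriv_mul_le hweight_smooth hm τ
    _ ≤ ∑ k ∈ range (N + 1),
          N.choose k * (k ! * 10 ^ k * (5 / 4) ^ N * C * (N ! * Real.exp 1) * B) := by
        refine sum_le_sum fun k hk => ?_
        rw [mul_assoc]
        have hkN : k ≤ N := Nat.lt_succ_iff.mp (mem_range.mp hk)
        exact mul_le_mul_of_nonneg_left (norm_iteratedDeriv_heatWeight_mul_le hkN
          (by linarith) ht hC (hbound _ (N.sub_le k) τ)) (by positivity)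
    _ = K * B := by simp only [K, sum_mul, mul_assoc]
    _ ≤ (K + 1) * B := by gcongr; linarith
    _ = _ := by ring
end

section
/- Let N₁ ≤ N be natural numbers and c ≥ 1 a real constant. Then there is a constant C depending only on N, N₁ such that for all k ∈ ℕ and all τ ∈ ℝ, the N₁-th forward finite difference in k of the function k ↦ (τ² + 2k + c)^N satisfies |Δ^{N₁} (τ² + 2k + c)^N| ≤ C · (τ² + 2k + N₁ + c)^{N − N₁}. -/
/-- Forward finite difference operator on real sequences. -/
def fdiff (f : ℕ → ℝ) : ℕ → ℝ := fun k => f (k + 1) - f k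

lemma fdiff_sum {ι : Type*} (m : ℕ) (s : Finset ι) (g : ι → ℕ → ℝ) :
    fdiff^[m] (fun k => ∑ j ∈ s, g j k) = fun k => ∑ j ∈ s, fdiff^[m] (g j) k := by
  induction m generalizing g with
  | zero => simp
  | succ m ih =>
    rw [Function.iterate_succ_apply]
    have h1 : fdiff (fun k => ∑ j ∈ s, g j k) = fun k => ∑ j ∈ s, fdiff (g j) k := by
      funext k
      simp [fdiff, Finset.sum_sub_distrib]
    rw [h1, ih]
    simp [Function.iterate_succ_apply]

lemma fdiff_const_mul (m : ℕ) (a : ℝ) (g : ℕ → ℝ) :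
    fdiff^[m] (fun k => a * g k) = fun k => a * fdiff^[m] g k := by
  induction m generalizing g with
  | zero => simp
  | succ m ih =>
    rw [Function.iterate_succ_apply]
    have h1 : fdiff (fun k => a * g k) = fun k => a * fdiff g k := by
      funext k; simp [fdiff]; ring
    rw [h1, ih]
    simp [Function.iterate_succ_apply]

lemma key (m : ℕ) : ∀ n : ℕ, ∃ C > 0, ∀ c : ℝ, 1 ≤ c → ∀ τ : ℝ, ∀ k : ℕ,
    |fdiff^[m] (fun j : ℕ => (τ ^ 2 + 2 * j + c) ^ n) k| ≤
      C * (τ ^ 2 + 2 * k + m + c) ^ (n - m) := by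
  induction m with
  | zero =>
    intro n
    refine ⟨1, one_pos, fun c hc τ k => ?_⟩
    have hk : (0:ℝ) ≤ (k:ℝ) := Nat.cast_nonneg k
    have hX : (0:ℝ) ≤ τ ^ 2 + 2 * k + c := by nlinarith [sq_nonneg τ]
    simp only [Function.iterate_zero, id_eq, Nat.cast_zero, add_zero, Nat.sub_zero, one_mul]
    rw [abs_of_nonneg (by positivity)]
  | succ m ih =>
    intro n
    choose C hCpos hC using ih
    set a : ℕ → ℝ := fun i => (n.choose i : ℝ) * 2 ^ (n - i) with ha
    have hanonneg : ∀ i, 0 ≤ a i := fun i => by positivity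
    refine ⟨(∑ i ∈ Finset.range n, a i * C i) + 1, ?_, ?_⟩
    · have : 0 ≤ ∑ i ∈ Finset.range n, a i * C i :=
        Finset.sum_nonneg fun i _ => mul_nonneg (hanonneg i) (hCpos i).le
      linarith
    intro c hc τ k
    have hk : (0:ℝ) ≤ (k:ℝ) := Nat.cast_nonneg k
    -- the difference of the power, via the binomial theorem
    have hΔ : fdiff (fun j : ℕ => (τ ^ 2 + 2 * j + c) ^ n)
        = fun j : ℕ => ∑ i ∈ Finset.range n, a i * (τ ^ 2 + 2 * j + c) ^ i := by
      funext j
      have h2 : τ ^ 2 + 2 * ((j : ℕ) + 1 : ℕ) + c = (τ ^ 2 + 2 * j + c) + 2 := by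
        push_cast; ring
      simp only [fdiff]
      rw [h2, add_pow, Finset.sum_range_succ]
      simp only [Nat.sub_self, pow_zero, Nat.choose_self, Nat.cast_one, mul_one, one_mul]
      have h3 : ∑ i ∈ Finset.range n, (τ ^ 2 + 2 * j + c) ^ i * 2 ^ (n - i) * (n.choose i : ℝ)
          = ∑ i ∈ Finset.range n, a i * (τ ^ 2 + 2 * j + c) ^ i :=
        Finset.sum_congr rfl fun i _ => by rw [ha]; ring
      linarith
    rw [Function.iterate_succ_apply, hΔ, fdiff_sum]
    have hsplit : ∀ i, fdiff^[m] (fun j : ℕ => a i * (τ ^ 2 + 2 * j + c) ^ i)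
        = fun k => a i * fdiff^[m] (fun j : ℕ => (τ ^ 2 + 2 * j + c) ^ i) k :=
      fun i => fdiff_const_mul m (a i) _
    have hY : (1:ℝ) ≤ τ ^ 2 + 2 * k + m + c := by
      have : (0:ℝ) ≤ (m:ℝ) := Nat.cast_nonneg m
      nlinarith [sq_nonneg τ]
    have hcast : τ ^ 2 + 2 * k + ((m + 1 : ℕ) : ℝ) + c = (τ ^ 2 + 2 * k + m + c) + 1 := by
      push_cast; ring
    set Y : ℝ := τ ^ 2 + 2 * k + m + c with hYdef
    have hterm : ∀ i ∈ Finset.range n,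
        |a i * fdiff^[m] (fun j : ℕ => (τ ^ 2 + 2 * j + c) ^ i) k|
          ≤ a i * C i * (Y + 1) ^ (n - (m + 1)) := by
      intro i hi
      rw [Finset.mem_range] at hi
      rw [abs_mul, abs_of_nonneg (hanonneg i)]
      have h1 := hC i c hc τ k
      have hexp : i - m ≤ n - (m + 1) := by omega
      have h2 : Y ^ (i - m) ≤ (Y + 1) ^ (n - (m + 1)) := by
        calc Y ^ (i - m) ≤ Y ^ (n - (m + 1)) := pow_le_pow_right₀ (by linarith) hexp
          _ ≤ (Y + 1) ^ (n - (m + 1)) := by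
              apply pow_le_pow_left₀ (by linarith) (by linarith)
      calc a i * |fdiff^[m] (fun j : ℕ => (τ ^ 2 + 2 * j + c) ^ i) k|
          ≤ a i * (C i * Y ^ (i - m)) := by
            apply mul_le_mul_of_nonneg_left _ (hanonneg i)
            exact h1
        _ ≤ a i * (C i * (Y + 1) ^ (n - (m + 1))) := by
            apply mul_le_mul_of_nonneg_left _ (hanonneg i)
            exact mul_le_mul_of_nonneg_left h2 (hCpos i).le
        _ = a i * C i * (Y + 1) ^ (n - (m + 1)) := by ring
    have hpow : (0:ℝ) < (Y + 1) ^ (n - (m + 1)) := by positivity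
    calc |∑ i ∈ Finset.range n,
            fdiff^[m] (fun j : ℕ => a i * (τ ^ 2 + 2 * j + c) ^ i) k|
        ≤ ∑ i ∈ Finset.range n,
            |fdiff^[m] (fun j : ℕ => a i * (τ ^ 2 + 2 * j + c) ^ i) k| :=
          Finset.abs_sum_le_sum_abs _ _
      _ ≤ ∑ i ∈ Finset.range n, a i * C i * (Y + 1) ^ (n - (m + 1)) := by
          apply Finset.sum_le_sum
          intro i hi
          rw [hsplit i]
          exact hterm i hi
      _ = (∑ i ∈ Finset.range n, a i * C i) * (Y + 1) ^ (n - (m + 1)) := by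
          rw [Finset.sum_mul]
      _ ≤ ((∑ i ∈ Finset.range n, a i * C i) + 1) * (Y + 1) ^ (n - (m + 1)) := by
          apply mul_le_mul_of_nonneg_right (by linarith) hpow.le
      _ = ((∑ i ∈ Finset.range n, a i * C i) + 1)
            * (τ ^ 2 + 2 * k + ((m + 1 : ℕ) : ℝ) + c) ^ (n - (m + 1)) := by
          rw [hcast]

theorem fdiff_poly_estimate (N₁ N : ℕ) (h : N₁ ≤ N) :
    ∃ C > 0, ∀ c : ℝ, 1 ≤ c → ∀ τ : ℝ, ∀ k : ℕ,
      |fdiff^[N₁] (fun n : ℕ => (τ ^ 2 + 2 * n + c) ^ N) k| ≤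
        C * (τ ^ 2 + 2 * k + N₁ + c) ^ (N - N₁) := by
  exact key N₁ N
end
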